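/- arXiv:1303.4150 — 2 statements merged into one kernel-verified Lean document; each statement's English description precedes it below -/
import Mathlib

section
/- Each permutation of {1,...,n} appears exactly once as a contiguous substring of M_n. -/
/-- All length-`n` windows of `s`. -/
def windows (n : ℕ) (s : List ℕ) : List (List ℕ) :=
  (List.range (s.length + 1 - n)).map fun i => (s.drop i).take n

/-- The permutations of `{1,…,n}` in order of first appearance as substrings of `s`. -/
def permsOrder (n : ℕ) (s : List ℕ) : List (List ℕ) :=
  (((windows n s).filter fun w => decide (w.Perm (List.range' 1 n))).reverse.dedup).reverse

/-- Length of the maximal overlap: the longest suffix of `s` that is a prefix of `t`. -/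
def ov (s t : List ℕ) : ℕ :=
  ((List.range (min s.length t.length + 1)).filter fun l => (t.take l).isSuffixOf s).foldr max 0

/-- Concatenate with maximal overlap. -/
def mergeOv (s t : List ℕ) : List ℕ := s ++ t.drop (ov s t)

/-- The recursively constructed superpermutation `M_n`. -/
def Mrec : ℕ → List ℕ
  | 0 => []
  | 1 => [1]
  | n + 2 =>
      ((permsOrder (n + 1) (Mrec (n + 1))).map fun P => P ++ [n + 2] ++ P).foldl mergeOv []


open List

/-!
Induction on `n`, with `t = n + 1`. Let `P_0, …, P_m` be the permutations of `{1,…,n}` in the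
order of `M_n`; by induction each occurs exactly once in this list. Two distinct consecutive
`P ++ t :: P` overlap in at most `n` letters, and only inside the `t`-free tail, so `M_{n+1}` is a
string of `t`-free blocks separated by single `t`s, where the `i`-th `t` is immediately preceded
and followed by `P_i`. A window `u ++ t :: v` of length `n + 1` therefore lies across exactly one
separator, at offset `|u|`, and equals `u ++ t :: v` there iff `P_i = v ++ u`. Hence it occurs once.
-/

lemma take_ov_suffix (s u : List ℕ) : u.take (ov s u) <:+ s := by
  have hne : (range (min s.length u.length + 1)).filter (fun l => (u.take l).isSuffixOf s) ≠ [] :=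
    ne_nil_of_mem (mem_filter.2 ⟨mem_range.2 (Nat.succ_pos _), by simp⟩)
  simpa [ov] using (mem_filter.1 (maximum_mem (foldr_max_of_ne_nil hne).symm)).2

lemma ov_le {s u : List ℕ} {m : ℕ} (h : ∀ l, u.take l <:+ s → l ≤ m) : ov s u ≤ m :=
  max_le_of_forall_le _ _ fun l hl => h l (by simpa using (mem_filter.1 hl).2)

lemma ov_nil (u : List ℕ) : ov [] u = 0 := by
  simp [ov, range_succ]

/-- Overlapping `Z ++ t :: P` with `Q ++ t :: Q` by more than `|Q|` letters would align the two
separators `t`, forcing `P = Q`. -/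
lemma ov_le_length_of_ne {t : ℕ} {Z P Q : List ℕ} (hQ : t ∉ Q) (hlen : P.length = Q.length)
    (hne : P ≠ Q) : ov (Z ++ t :: P) (Q ++ t :: Q) ≤ Q.length := by
  refine ov_le fun l hl => ?_
  by_contra! hl'
  obtain ⟨k, rfl⟩ : ∃ k, l = Q.length + k + 1 := ⟨l - Q.length - 1, by omega⟩
  have htake : (Q ++ t :: Q).take (Q.length + k + 1) = Q ++ t :: Q.take k := by
    rw [take_append, take_of_length_le (by omega),
      show Q.length + k + 1 - Q.length = k + 1 by omega, take_succ_cons]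
  rw [htake] at hl
  obtain ⟨W, hW⟩ : t :: P <:+ Q ++ t :: Q.take k :=
    suffix_of_suffix_length_le (suffix_append Z _) hl (by simp [hlen])
  obtain ⟨-, -, hPQ⟩ :=
    (append_cons_inj_of_notMem hQ (fun h => hQ (mem_of_mem_take h))).1 hW.symm
  exact hne (hPQ ▸ (take_prefix k Q).eq_of_length (hPQ ▸ hlen))

section

variable {α : Type*}

lemma drop_eq_and_take_eq_iff {P u v : List α} {k : ℕ} (hk : k ≤ P.length) :
    P.drop k = u ∧ P.take k = v ↔ k = v.length ∧ v ++ u = P := by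
  constructor
  · rintro ⟨rfl, rfl⟩
    exact ⟨by simp [hk], take_append_drop k P⟩
  · rintro ⟨rfl, rfl⟩
    simp

lemma intercalate_append_singleton (sep : List α) {Xs : List (List α)} (C : List α)
    (h : Xs ≠ []) : sep.intercalate (Xs ++ [C]) = sep.intercalate Xs ++ sep ++ C := by
  induction Xs with
  | nil => exact absurd rfl h
  | cons X Xs ih =>
    rcases eq_or_ne Xs [] with rfl | hXs
    · simp
    · rw [cons_append, intercalate_cons_of_ne_nil (by simp), ih hXs,
        intercalate_cons_of_ne_nil hXs]
      simp

lemma intercalate_append_pair (sep : List α) (Xs : List (List α)) (C D E : List α) :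
    sep.intercalate (Xs ++ [C ++ D, E]) = sep.intercalate (Xs ++ [C]) ++ D ++ sep ++ E := by
  induction Xs with
  | nil => simp
  | cons X Xs ih =>
    rw [cons_append, cons_append, intercalate_cons_of_ne_nil (by simp),
      intercalate_cons_of_ne_nil (by simp), ih]
    simp

/-- `Blocks t As L`: the blocks `As` are `t`-free, and the `i`-th separator of
`[t].intercalate As` is flanked on both sides by `L[i]`. -/
inductive Blocks (t : α) : List (List α) → List (List α) → Prop
  | single {A : List α} : t ∉ A → Blocks t [A] []
  | cons {A B P : List α} {As L : List (List α)} : t ∉ A → P <:+ A → P <+: B →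
      Blocks t (B :: As) L → Blocks t (A :: B :: As) (P :: L)

lemma Blocks.length_eq {t : α} {As L : List (List α)} (h : Blocks t As L) :
    As.length = L.length + 1 := by
  induction h <;> simp [*]

lemma Blocks.append_pair {t : α} {Xs L : List (List α)} {C D P : List α}
    (h : Blocks t (Xs ++ [C]) L) (hD : t ∉ D) (hP : P <:+ C ++ D) (htP : t ∉ P) :
    Blocks t (Xs ++ [C ++ D, P]) (L ++ [P]) := by
  induction Xs generalizing L with
  | nil =>
    cases h with
    | single hC => exact .cons (by simp [hC, hD]) hP (prefix_refl P) (.single htP)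
  | cons X Xs ih =>
    cases Xs with
    | nil =>
      cases h with
      | cons hX hPX hPC h' =>
        exact .cons hX hPX (hPC.trans (prefix_append C D)) (ih h')
    | cons Y Ys =>
      cases h with
      | cons hX hPX hPY h' => exact .cons hX hPX hPY (ih h')

end

lemma mergeOv_intercalate {t : ℕ} {Xs : List (List ℕ)} {C P : List ℕ} (hXs : Xs ≠ [])
    (hP : t ∉ P) (hlen : C.length = P.length) (hne : C ≠ P) :
    ∃ D, t ∉ D ∧ P <:+ C ++ D ∧
      mergeOv ([t].intercalate (Xs ++ [C])) (P ++ t :: P) =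
        [t].intercalate (Xs ++ [C ++ D, P]) := by
  set r := ov ([t].intercalate (Xs ++ [C])) (P ++ t :: P)
  have hacc : [t].intercalate (Xs ++ [C]) = ([t].intercalate Xs ++ [t]) ++ C :=
    intercalate_append_singleton [t] C hXs
  have hr : r ≤ P.length := by
    rw [show r = ov ([t].intercalate Xs ++ t :: C) (P ++ t :: P) by simp [r, hacc]]
    exact ov_le_length_of_ne hP hlen hne
  have hsuf : P.take r <:+ C := by
    have h := take_ov_suffix ([t].intercalate (Xs ++ [C])) (P ++ t :: P)
    rw [take_append_of_le_length hr, hacc] at h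
    exact suffix_of_suffix_length_le h (suffix_append _ C) (by simp [hlen])
  obtain ⟨W, hW⟩ := hsuf
  refine ⟨P.drop r, fun h => hP (mem_of_mem_drop h), ⟨W, ?_⟩, ?_⟩
  · rw [← hW, append_assoc, take_append_drop]
  · rw [mergeOv, intercalate_append_pair, drop_append_of_le_length hr]
    simp

lemma foldl_mergeOv_eq_intercalate {t n : ℕ} (L : List (List ℕ)) (P : List ℕ)
    (hL : ∀ Q ∈ L ++ [P], t ∉ Q ∧ Q.length = n) (hnd : (L ++ [P]).Nodup) :
    ∃ Xs, ((L ++ [P]).map fun Q => Q ++ t :: Q).foldl mergeOv [] = [t].intercalate (Xs ++ [P]) ∧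
      Blocks t (Xs ++ [P]) (L ++ [P]) := by
  induction L using reverseRecOn generalizing P with
  | nil =>
    have htP := (hL P (by simp)).1
    exact ⟨[P], by simp [mergeOv, ov_nil], .cons htP suffix_rfl prefix_rfl (.single htP)⟩
  | append_singleton L C ih =>
    have hL' : ∀ Q ∈ L ++ [C], t ∉ Q ∧ Q.length = n := fun Q hQ =>
      hL Q (mem_append_left _ hQ)
    obtain ⟨Xs, hfold, hblocks⟩ := ih C hL' (hnd.sublist (sublist_append_left _ _))
    have hXs : Xs ≠ [] := by
      rintro rfl
      simpa using hblocks.length_eq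
    have hne : C ≠ P := by
      rintro rfl
      simp [nodup_append] at hnd
    obtain ⟨htP, hlenP⟩ := hL P (by simp)
    obtain ⟨D, hD, hPD, hmerge⟩ :=
      mergeOv_intercalate hXs htP ((hL' C (by simp)).2.trans hlenP.symm) hne
    refine ⟨Xs ++ [C ++ D], ?_, ?_⟩
    · rw [map_append, foldl_append, hfold]
      simpa using hmerge
    · simpa using hblocks.append_pair hD hPD htP

lemma infix_of_mem_windows {k : ℕ} {s w : List ℕ} (h : w ∈ windows k s) : w <:+: s := by
  obtain ⟨i, -, rfl⟩ := mem_map.1 h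
  exact (take_prefix k _).isInfix.trans (drop_suffix i s).isInfix

lemma windows_append {k : ℕ} (X Y : List ℕ) (h : k ≤ Y.length + 1) :
    windows k (X ++ Y) =
      (range X.length).map (fun i => ((X ++ Y).drop i).take k) ++ windows k Y := by
  have hl : (X ++ Y).length + 1 - k = X.length + (Y.length + 1 - k) := by
    simp only [length_append]; omega
  rw [windows, hl, range_add, map_append, map_map]
  congr 1
  refine map_congr_left fun i _ => ?_
  simp only [Function.comp, drop_length_add_append]

lemma take_drop_append_cons_eq {t n i : ℕ} {A M P : List ℕ} (hPA : P <:+ A) (hPM : P <+: M)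
    (hP : P.length = n) (hiA : i ≤ A.length) (hAi : A.length ≤ n + i) :
    ((A ++ t :: M).drop i).take (n + 1) =
      P.drop (n - (A.length - i)) ++ t :: P.take (n - (A.length - i)) := by
  have hnA : n ≤ A.length := hP ▸ hPA.length_le
  have hA : A.drop i = P.drop (n - (A.length - i)) := by
    rw [suffix_iff_eq_drop.1 hPA, drop_drop, hP]
    congr 1
    omega
  obtain ⟨R, rfl⟩ := hPM
  rw [drop_append_of_le_length hiA, take_append, take_of_length_le (by simp; omega), hA,
    show n + 1 - (P.drop (n - (A.length - i))).length = n - (A.length - i) + 1 by simp; omega,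
    take_succ_cons, take_append_of_le_length (by omega)]

lemma take_drop_append_cons_eq_iff {t n i : ℕ} {A M P u v : List ℕ} (hA : t ∉ A)
    (hPA : P <:+ A) (hPM : P <+: M) (hP : P.length = n) (huv : u.length + v.length = n)
    (hiA : i ≤ A.length) :
    ((A ++ t :: M).drop i).take (n + 1) = u ++ t :: v ↔
      i = A.length - u.length ∧ v ++ u = P := by
  have hnA : n ≤ A.length := hP ▸ hPA.length_le
  by_cases hAi : A.length ≤ n + i
  · have htP : t ∉ P := fun h => hA (hPA.subset h)
    rw [take_drop_append_cons_eq hPA hPM hP hiA hAi,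
      append_cons_inj_of_notMem (fun h => htP (mem_of_mem_drop h))
        (fun h => htP (mem_of_mem_take h)),
      and_left_comm, eq_self, true_and, drop_eq_and_take_eq_iff (by omega)]
    exact and_congr_left fun _ => by omega
  · have hwin : ((A ++ t :: M).drop i).take (n + 1) <+: A.drop i := by
      rw [drop_append_of_le_length hiA, take_append_of_le_length (by simp; omega)]
      exact take_prefix _ _
    refine iff_of_false (fun h => hA ?_) (by omega)
    exact (drop_suffix i A).subset (hwin.subset (h ▸ mem_append_right u mem_cons_self))

lemma count_windows_intercalate {t n : ℕ} {u v : List ℕ}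
    (huv : u.length + v.length = n) {As L : List (List ℕ)} (h : Blocks t As L)
    (hL : ∀ P ∈ L, P.length = n) :
    count (u ++ t :: v) (windows (n + 1) ([t].intercalate As)) = count (v ++ u) L := by
  induction h with
  | single hA =>
    refine count_eq_zero.2 fun hmem => hA ?_
    simpa using (infix_of_mem_windows hmem).subset (mem_append_right u mem_cons_self)
  | @cons A B P As L hA hPA hPB _ ih =>
    have hP := hL P mem_cons_self
    set M := [t].intercalate (B :: As)
    have hPM : P <+: M := by
      cases As <;> simp [M, hPB, hPB.trans (prefix_append _ _)]
    have hsplit : [t].intercalate (A :: B :: As) = (A ++ [t]) ++ M := by simp [M]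
    have hsep : count (u ++ t :: v)
        ((range (A ++ [t]).length).map fun i => (((A ++ [t]) ++ M).drop i).take (n + 1)) =
        if P = v ++ u then 1 else 0 := by
      rw [count_eq_countP, countP_map]
      have hwin : ∀ i ∈ range (A ++ [t]).length,
          (((A ++ [t]) ++ M).drop i).take (n + 1) = u ++ t :: v ↔
            i = A.length - u.length ∧ v ++ u = P := by
        intro i hi
        rw [append_assoc, singleton_append]
        exact take_drop_append_cons_eq_iff hA hPA hPM hP huv (by simp at hi; omega)
      split_ifs with hPvu
      · rw [countP_congr (q := (· == A.length - u.length)) (by simpa [hPvu] using hwin),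
          ← count_eq_countP]
        exact count_eq_one_of_mem nodup_range (by simp)
      · exact countP_eq_zero.2 fun i hi hw => hPvu ((hwin i hi).1 (by simpa using hw)).2.symm
    rw [hsplit, windows_append _ _ (by have := hPM.length_le; omega), count_append, hsep,
      ih fun Q hQ => hL Q (mem_cons_of_mem P hQ), count_cons]
    simp [add_comm]

lemma mem_permsOrder_iff {n : ℕ} {s P : List ℕ} :
    P ∈ permsOrder n s ↔ P ∈ windows n s ∧ P ~ range' 1 n := by
  simp [permsOrder]

lemma nodup_permsOrder (n : ℕ) (s : List ℕ) : (permsOrder n s).Nodup :=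
  nodup_reverse.2 (nodup_dedup _)

lemma succ_notMem_of_perm_range' {n : ℕ} {P : List ℕ} (h : P ~ range' 1 n) : n + 1 ∉ P := by
  simp [h.mem_iff, add_comm]

lemma exists_eq_append_cons_of_perm_range' {n : ℕ} {w : List ℕ} (hw : w ~ range' 1 (n + 1)) :
    ∃ u v, w = u ++ (n + 1) :: v ∧ v ++ u ~ range' 1 n := by
  obtain ⟨u, v, rfl⟩ := append_of_mem (a := n + 1) (hw.mem_iff.2 (by simp))
  refine ⟨u, v, rfl, perm_append_comm.trans ?_⟩
  have h : (n + 1) :: (u ++ v) ~ (n + 1) :: range' 1 n := by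
    refine perm_middle.symm.trans (hw.trans ?_)
    rw [range'_1_concat, add_comm 1 n]
    exact perm_append_singleton _ _
  exact h.cons_inv

lemma Mrec_succ {n : ℕ} (hn : 1 ≤ n) :
    Mrec (n + 1) = ((permsOrder n (Mrec n)).map fun P => P ++ (n + 1) :: P).foldl mergeOv [] := by
  obtain ⟨k, rfl⟩ := Nat.exists_eq_add_of_le' hn
  simp [Mrec]

lemma count_windows_Mrec_succ {n : ℕ} (hn : 1 ≤ n)
    (ih : ∀ w, w ~ range' 1 n → count w (windows n (Mrec n)) = 1) {w : List ℕ}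
    (hw : w ~ range' 1 (n + 1)) : count w (windows (n + 1) (Mrec (n + 1))) = 1 := by
  rw [Mrec_succ hn]
  set L := permsOrder n (Mrec n)
  have hL : ∀ P ∈ L, n + 1 ∉ P ∧ P.length = n := fun P hP =>
    have hP' := (mem_permsOrder_iff.1 hP).2
    ⟨succ_notMem_of_perm_range' hP', by simpa using hP'.length_eq⟩
  have hcount : ∀ P, P ~ range' 1 n → count P L = 1 := fun P hP =>
    count_eq_one_of_mem (nodup_permsOrder _ _)
      (mem_permsOrder_iff.2 ⟨count_pos_iff.1 (by rw [ih P hP]; omega), hP⟩)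
  obtain ⟨L', P, hLP⟩ : ∃ L' P, L = L' ++ [P] := by
    refine (eq_nil_or_concat' L).resolve_left fun hnil => ?_
    simpa [hnil] using hcount _ (Perm.refl _)
  obtain ⟨Xs, hfold, hblocks⟩ :=
    foldl_mergeOv_eq_intercalate L' P (hLP ▸ hL) (hLP ▸ nodup_permsOrder _ _)
  obtain ⟨u, v, rfl, hvu⟩ := exists_eq_append_cons_of_perm_range' hw
  have huv : u.length + v.length = n := by simpa [add_comm] using hvu.length_eq
  rw [hLP, hfold, count_windows_intercalate huv hblocks fun Q hQ => (hL Q (hLP ▸ hQ)).2, ← hLP,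
    hcount _ hvu]

lemma count_windows_Mrec {n : ℕ} (hn : 1 ≤ n) {w : List ℕ} (hw : w ~ range' 1 n) :
    count w (windows n (Mrec n)) = 1 := by
  induction n, hn using Nat.le_induction generalizing w with
  | base =>
    rw [perm_singleton.1 hw]
    rfl
  | succ n hn ih => exact count_windows_Mrec_succ hn (fun _ => ih) hw

lemma count_windows_eq_countP (k : ℕ) (s w : List ℕ) :
    count w (windows k s) = (range (s.length + 1 - k)).countP fun i => (s.drop i).take k = w := by
  rw [windows, count_eq_countP, countP_map]
  exact countP_congr fun i _ => by simp

theorem stmt8 (n : ℕ) (hn : 1 ≤ n) (w : List ℕ) (hw : w.Perm (List.range' 1 n)) :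
    ((List.range ((Mrec n).length + 1 - n)).countP
      fun i => decide (((Mrec n).drop i).take n = w)) = 1 := by
  rw [← count_windows_eq_countP]
  exact count_windows_Mrec hn hw
end

section
/- For 2 ≤ k < n and fixed values j_2, ..., j_k, a permutation σ ∈ S_n has circular shift representation beginning with j_2 ⋯ j_k if and only if deleting the symbols k+2, k+3, ..., n from the one-line representation of σ yields a cyclic rotation of a fixed word τ of length k+1 depending only on j_2, ..., j_k. -/
def pcyc (k : ℕ) : Equiv.Perm ℕ := (List.range' 1 k).formPerm

/-- The ordered composition `p_2^{e 2} ∘ p_3^{e 3} ∘ ⋯ ∘ p_n^{e n}`. -/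
def circProd (n : ℕ) (e : ℕ → ℕ) : Equiv.Perm ℕ :=
  ((List.range' 2 (n - 1)).map fun i => (pcyc i) ^ (e i)).prod

/-!
Deleting the symbols `> k + 1` from the one-line word of `σ = p_2^{j_2} ⋯ p_n^{j_n}` leaves a
rotation of `τ`, the one-line word of `p_2^{j_2} ⋯ p_k^{j_k}` on `{1, …, k + 1}`: composing on the
right with `p_m^j` for `m > k` rotates the first `m` letters of the word and keeps the others, which
are symbols `> m`; and deleting letters from a rotated word gives a rotation of the shortened word.
Conversely, `τ` ends with `k + 1` and has distinct letters, so it is determined by any of its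
rotations, and the circular shift representation of `p_2^{j_2} ⋯ p_k^{j_k}` is unique.
-/

open List Equiv

theorem List.IsRotated.filter {α : Type*} {l l' : List α} (h : l ~r l') (p : α → Bool) :
    l.filter p ~r l'.filter p := by
  obtain ⟨r, rfl⟩ := h
  conv_lhs => rw [← take_append_drop (r % l.length) l]
  rw [rotate_eq_drop_append_take_mod, filter_append, filter_append]
  exact isRotated_append

theorem List.IsRotated.eq_of_cons {α : Type*} {x : α} {a b : List α} (h : x :: a ~r x :: b)
    (hnd : (x :: a).Nodup) : a = b := by
  obtain ⟨r, hr⟩ := h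
  have hlen : r % (x :: a).length < (x :: a).length := Nat.mod_lt _ (by simp)
  have hmod : r % (x :: a).length = 0 := by
    have hhead := congr_arg head? hr
    rw [← rotate_mod, head?_rotate hlen, getElem?_eq_getElem hlen, head?_cons,
      Option.some_inj] at hhead
    exact (hnd.getElem_inj_iff (j := 0) (hj := by simp)).1 hhead
  rw [← rotate_mod, hmod, rotate_zero] at hr
  exact (cons_inj_right x).1 hr

theorem List.IsRotated.eq_of_append_singleton {α : Type*} {x : α} {a b : List α}
    (h : a ++ [x] ~r b ++ [x]) (hnd : (a ++ [x]).Nodup) : a = b :=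
  ((isRotated_concat x a).symm.trans (h.trans (isRotated_concat x b))).eq_of_cons
    ((isRotated_concat x a).nodup_iff.1 hnd)

theorem List.mem_range'_one {x n : ℕ} : x ∈ range' 1 n ↔ x ∈ Set.Icc 1 n := by
  rw [mem_range'_1, Set.mem_Icc]
  omega

theorem List.notMem_Icc_of_mem_range' {x m l : ℕ} (hx : x ∈ range' (m + 1) l) :
    x ∉ Set.Icc 1 m := fun h => by
  rw [mem_range'_1] at hx
  exact absurd h.2 (by omega)

theorem List.range'_one_eq_append {m n : ℕ} (hmn : m ≤ n) :
    range' 1 n = range' 1 m ++ range' (m + 1) (n - m) := by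
  rw [add_comm, range'_append_1, Nat.add_sub_cancel' hmn]

namespace Equiv.Perm

def SupportedIn (σ : Perm ℕ) (n : ℕ) : Prop := ∀ x, x ∉ Set.Icc 1 n → σ x = x

variable {σ τ : Perm ℕ} {m n : ℕ}

theorem SupportedIn.mono (hσ : σ.SupportedIn m) (hmn : m ≤ n) : σ.SupportedIn n :=
  fun x hx => hσ x fun h => hx ⟨h.1, h.2.trans hmn⟩

theorem SupportedIn.mul (hσ : σ.SupportedIn n) (hτ : τ.SupportedIn n) : (σ * τ).SupportedIn n :=
  fun x hx => by rw [mul_apply, hτ x hx, hσ x hx]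

theorem SupportedIn.pow (hσ : σ.SupportedIn n) (e : ℕ) : (σ ^ e).SupportedIn n :=
  fun x hx => pow_apply_eq_self_of_apply_eq_self (hσ x hx) e

theorem SupportedIn.inv (hσ : σ.SupportedIn n) : σ⁻¹.SupportedIn n :=
  fun x hx => inv_eq_iff_eq.2 (hσ x hx).symm

theorem SupportedIn.eq_one (hσ : σ.SupportedIn 0) : σ = 1 :=
  ext fun x => hσ x fun h => by simpa using h.1.trans h.2

theorem SupportedIn.apply_mem (hσ : σ.SupportedIn n) {x : ℕ} (hx : x ∈ Set.Icc 1 n) :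
    σ x ∈ Set.Icc 1 n := by
  by_contra hσx
  exact hσx (by rwa [σ.injective (hσ _ hσx)])

end Equiv.Perm

open Equiv.Perm

theorem supportedIn_pcyc (m : ℕ) : (pcyc m).SupportedIn m := fun _ hx =>
  formPerm_apply_of_notMem fun h => hx (mem_range'_one.1 h)

theorem pcyc_one : pcyc 1 = 1 := formPerm_singleton 1

theorem pcyc_pow_apply_one_add {m i : ℕ} (e : ℕ) (hi : i < m) :
    (pcyc m ^ e) (1 + i) = 1 + (i + e) % m := by
  have h := formPerm_pow_apply_getElem (range' 1 m) nodup_range' e i (by simpa using hi)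
  simpa [pcyc, getElem_range'_1] using h

theorem pcyc_pow_apply_sub {m e : ℕ} (he : e < m) : (pcyc m ^ e) (m - e) = m := by
  rw [show m - e = 1 + (m - 1 - e) by omega, pcyc_pow_apply_one_add e (by omega),
    Nat.mod_eq_of_lt (by omega)]
  omega

theorem map_pcyc_pow_range' (m e : ℕ) : (range' 1 m).map (pcyc m ^ e) = (range' 1 m).rotate e := by
  apply ext_getElem (by simp)
  intro i h _
  simp only [getElem_map, getElem_rotate, getElem_range'_1, length_range']
  exact pcyc_pow_apply_one_add e (by simpa using h)

theorem circProd_succ (n : ℕ) (e : ℕ → ℕ) :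
    circProd (n + 1) e = circProd n e * pcyc (n + 1) ^ e (n + 1) := by
  rcases n with _ | n
  · simp [pcyc_one, circProd]
  · simp [circProd, range'_concat, Nat.add_comm 2]

theorem supportedIn_circProd (n : ℕ) (e : ℕ → ℕ) : (circProd n e).SupportedIn n := by
  induction n with
  | zero => exact fun x _ => rfl
  | succ n ih =>
    rw [circProd_succ]
    exact (ih.mono n.le_succ).mul ((supportedIn_pcyc _).pow _)

theorem circProd_congr {n : ℕ} {e f : ℕ → ℕ} (h : ∀ i ∈ Finset.Icc 2 n, e i = f i) :
    circProd n e = circProd n f := by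
  refine congr_arg List.prod (map_congr_left fun i hi => ?_)
  rw [mem_range'_1] at hi
  rw [h i (Finset.mem_Icc.2 ⟨hi.1, by omega⟩)]

theorem circProd_apply_sub {n : ℕ} {e : ℕ → ℕ} (he : e (n + 1) < n + 1) :
    circProd (n + 1) e (n + 1 - e (n + 1)) = n + 1 := by
  rw [circProd_succ, mul_apply, pcyc_pow_apply_sub he]
  exact supportedIn_circProd n e _ (by simp)

theorem exists_circProd_eq {n : ℕ} {σ : Perm ℕ} (hσ : σ.SupportedIn n) :
    ∃ e : ℕ → ℕ, (∀ i ∈ Finset.Icc 2 n, e i < i) ∧ σ = circProd n e := by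
  induction n generalizing σ with
  | zero => exact ⟨0, by simp, hσ.eq_one⟩
  | succ n ih =>
    obtain ⟨t, hσt, ht1, ht2⟩ : ∃ t, σ t = n + 1 ∧ 1 ≤ t ∧ t ≤ n + 1 :=
      ⟨σ⁻¹ (n + 1), σ.apply_symm_apply _, hσ.inv.apply_mem ⟨by omega, le_rfl⟩⟩
    have hpt : (pcyc (n + 1) ^ (n + 1 - t)) t = n + 1 := by
      simpa [Nat.sub_sub_self ht2] using pcyc_pow_apply_sub (m := n + 1) (e := n + 1 - t) (by omega)
    have hσ' : (σ * (pcyc (n + 1) ^ (n + 1 - t))⁻¹).SupportedIn n := by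
      intro x hx
      rcases eq_or_ne x (n + 1) with rfl | hne
      · rw [mul_apply, inv_eq_iff_eq.2 hpt.symm, hσt]
      · exact (hσ.mul ((supportedIn_pcyc _).pow _).inv) x fun ⟨h1, h2⟩ => hx ⟨h1, by omega⟩
    obtain ⟨e, he, hσe⟩ := ih hσ'
    refine ⟨Function.update e (n + 1) (n + 1 - t), fun i hi => ?_, ?_⟩
    · rcases eq_or_ne i (n + 1) with rfl | hne
      · simp only [Function.update_self]
        omega
      · obtain ⟨hi2, hin⟩ := Finset.mem_Icc.1 hi
        rw [Function.update_of_ne hne]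
        exact he i (Finset.mem_Icc.2 ⟨hi2, by omega⟩)
    · rw [circProd_succ, Function.update_self,
        circProd_congr fun i hi => Function.update_of_ne
          ((Finset.mem_Icc.1 hi).2.trans_lt n.lt_succ_self).ne _ _, ← hσe]
      group

theorem circProd_eq_circProd_iff {n : ℕ} {e f : ℕ → ℕ} (he : ∀ i ∈ Finset.Icc 2 n, e i < i)
    (hf : ∀ i ∈ Finset.Icc 2 n, f i < i) :
    circProd n e = circProd n f ↔ ∀ i ∈ Finset.Icc 2 n, e i = f i := by
  refine ⟨fun h => ?_, circProd_congr⟩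
  induction n with
  | zero => simp
  | succ n ih =>
    intro i hi
    obtain ⟨hi2, hin⟩ := Finset.mem_Icc.1 hi
    have htop_mem : n + 1 ∈ Finset.Icc 2 (n + 1) := Finset.mem_Icc.2 ⟨hi2.trans hin, le_rfl⟩
    have hen := he _ htop_mem
    have hfn := hf _ htop_mem
    have htop : e (n + 1) = f (n + 1) := by
      have hpre := (circProd_apply_sub hen).trans (circProd_apply_sub hfn).symm
      rw [h] at hpre
      have := (circProd (n + 1) f).injective hpre
      omega
    have hn : circProd n e = circProd n f := by
      rw [circProd_succ, circProd_succ, htop] at h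
      exact mul_right_cancel h
    have hsub : Finset.Icc 2 n ⊆ Finset.Icc 2 (n + 1) := Finset.Icc_subset_Icc_right n.le_succ
    rcases eq_or_ne i (n + 1) with rfl | hne
    · exact htop
    · exact ih (fun i hi => he i (hsub hi)) (fun i hi => hf i (hsub hi)) hn i
        (Finset.mem_Icc.2 ⟨hi2, by omega⟩)

def oneLine (n : ℕ) (σ : Perm ℕ) : List ℕ := (range' 1 n).map σ

theorem oneLine_succ {σ : Perm ℕ} {k : ℕ} (hσ : σ.SupportedIn k) :
    oneLine (k + 1) σ = oneLine k σ ++ [k + 1] := by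
  simp [oneLine, range'_concat, add_comm, hσ (k + 1) (by simp)]

theorem oneLine_nodup (n : ℕ) (σ : Perm ℕ) : (oneLine n σ).Nodup :=
  Nodup.map σ.injective nodup_range'

theorem eq_of_oneLine_eq {σ τ : Perm ℕ} {n : ℕ} (hσ : σ.SupportedIn n) (hτ : τ.SupportedIn n)
    (h : oneLine n σ = oneLine n τ) : σ = τ := by
  ext x
  by_cases hx : x ∈ Set.Icc 1 n
  · exact map_inj_left.1 h x (mem_range'_one.2 hx)
  · rw [hσ x hx, hτ x hx]

theorem isRotated_oneLine_succ_iff {σ τ : Perm ℕ} {k : ℕ} (hσ : σ.SupportedIn k)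
    (hτ : τ.SupportedIn k) : oneLine (k + 1) σ ~r oneLine (k + 1) τ ↔ σ = τ := by
  refine ⟨fun h => ?_, fun h => h ▸ IsRotated.refl _⟩
  rw [oneLine_succ hσ, oneLine_succ hτ] at h
  exact eq_of_oneLine_eq hσ hτ (h.eq_of_append_singleton (oneLine_succ hσ ▸ oneLine_nodup _ _))

theorem filter_map_range'_eq_nil {σ : Perm ℕ} {k m : ℕ} (hσ : σ.SupportedIn m) (hkm : k ≤ m)
    (l : ℕ) : ((range' (m + 1) l).map σ).filter (· ≤ k) = [] := by
  refine filter_eq_nil_iff.2 fun y hy => ?_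
  obtain ⟨x, hx, rfl⟩ := mem_map.1 hy
  rw [hσ x (notMem_Icc_of_mem_range' hx)]
  simpa using hkm.trans_lt (mem_range'_1.1 hx).1

theorem filter_oneLine_of_supportedIn {σ : Perm ℕ} {m n : ℕ} (hσ : σ.SupportedIn m)
    (hmn : m ≤ n) : (oneLine n σ).filter (· ≤ m) = oneLine m σ := by
  rw [oneLine, oneLine, range'_one_eq_append hmn, map_append, filter_append,
    filter_map_range'_eq_nil hσ le_rfl, append_nil, filter_eq_self]
  intro y hy
  obtain ⟨x, hx, rfl⟩ := mem_map.1 hy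
  simpa using (hσ.apply_mem (mem_range'_one.1 hx)).2

theorem filter_oneLine_mul_pcyc_pow_isRotated {σ : Perm ℕ} {k m n : ℕ} (hσ : σ.SupportedIn m)
    (hkm : k < m) (hmn : m ≤ n) (e : ℕ) :
    (oneLine n (σ * pcyc m ^ e)).filter (· ≤ k + 1) ~r (oneLine n σ).filter (· ≤ k + 1) := by
  have hfix : (range' (m + 1) (n - m)).map (pcyc m ^ e) = range' (m + 1) (n - m) :=
    (map_congr_left (g := id) fun x hx =>
      ((supportedIn_pcyc m).pow e) x (notMem_Icc_of_mem_range' hx)).trans (map_id _)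
  have hword : oneLine n (σ * pcyc m ^ e)
      = ((range' 1 m).rotate e).map σ ++ (range' (m + 1) (n - m)).map σ := by
    rw [oneLine, coe_mul, ← map_map, range'_one_eq_append hmn, map_append, hfix,
      map_pcyc_pow_range', map_append]
  rw [hword, oneLine, range'_one_eq_append hmn, map_append, filter_append, filter_append,
    filter_map_range'_eq_nil hσ hkm, append_nil, append_nil]
  exact ((IsRotated.forall _ e).map σ).filter _

theorem filter_oneLine_circProd_isRotated {k m n : ℕ} (hkm : k ≤ m) (hmn : m ≤ n) (hkn : k < n)
    (e : ℕ → ℕ) :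
    (oneLine n (circProd m e)).filter (· ≤ k + 1) ~r oneLine (k + 1) (circProd k e) := by
  induction m, hkm using Nat.le_induction with
  | base =>
    rw [filter_oneLine_of_supportedIn ((supportedIn_circProd k e).mono k.le_succ) hkn]
  | succ m hkm ih =>
    rw [circProd_succ]
    exact (filter_oneLine_mul_pcyc_pow_isRotated ((supportedIn_circProd m e).mono m.le_succ)
      (by omega) hmn _).trans (ih (by omega))

theorem stmt14_general (n k : ℕ) (hk : k < n) (d : ℕ → ℕ)
    (hd : ∀ i ∈ Finset.Icc 2 k, d i < i) :
    ∃ τ : List ℕ, τ.length = k + 1 ∧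
      ∀ σ : Equiv.Perm ℕ, (∀ i, i ∉ Set.Icc 1 n → σ i = i) →
        ((∃ e : ℕ → ℕ, (∀ i ∈ Finset.Icc 2 n, e i < i) ∧
            (∀ i ∈ Finset.Icc 2 k, e i = d i) ∧ σ = circProd n e) ↔
          ∃ r : ℕ,
            ((List.range' 1 n).map fun x => σ x).filter (fun x => decide (x ≤ k + 1)) =
              τ.rotate r) := by
  refine ⟨oneLine (k + 1) (circProd k d), by simp [oneLine], fun σ hσ => ?_⟩
  obtain ⟨e, he, rfl⟩ := exists_circProd_eq hσ
  have hek : ∀ i ∈ Finset.Icc 2 k, e i < i :=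
    fun i hi => he i (Finset.Icc_subset_Icc_right hk.le hi)
  have hfilter := filter_oneLine_circProd_isRotated hk.le le_rfl hk e
  calc (∃ f : ℕ → ℕ, (∀ i ∈ Finset.Icc 2 n, f i < i) ∧
          (∀ i ∈ Finset.Icc 2 k, f i = d i) ∧ circProd n e = circProd n f)
      ↔ ∀ i ∈ Finset.Icc 2 k, e i = d i := by
        refine ⟨fun ⟨f, hf, hfd, hef⟩ i hi => ?_, fun hed => ⟨e, he, hed, rfl⟩⟩
        rw [(circProd_eq_circProd_iff he hf).1 hef i (Finset.Icc_subset_Icc_right hk.le hi),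
          hfd i hi]
    _ ↔ circProd k e = circProd k d := (circProd_eq_circProd_iff hek hd).symm
    _ ↔ oneLine (k + 1) (circProd k e) ~r oneLine (k + 1) (circProd k d) :=
        (isRotated_oneLine_succ_iff (supportedIn_circProd k e) (supportedIn_circProd k d)).symm
    _ ↔ (oneLine n (circProd n e)).filter (· ≤ k + 1) ~r oneLine (k + 1) (circProd k d) :=
        ⟨hfilter.trans, hfilter.symm.trans⟩
    _ ↔ _ := by rw [isRotated_comm]; exact exists_congr fun r => eq_comm

theorem stmt14 (n k : ℕ) (h2 : 2 ≤ k) (hk : k < n) (d : ℕ → ℕ)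
    (hd : ∀ i ∈ Finset.Icc 2 k, d i < i) :
    ∃ τ : List ℕ, τ.length = k + 1 ∧
      ∀ σ : Equiv.Perm ℕ, (∀ i, i ∉ Set.Icc 1 n → σ i = i) →
        ((∃ e : ℕ → ℕ, (∀ i ∈ Finset.Icc 2 n, e i < i) ∧
            (∀ i ∈ Finset.Icc 2 k, e i = d i) ∧ σ = circProd n e) ↔
          ∃ r : ℕ,
            ((List.range' 1 n).map fun x => σ x).filter (fun x => decide (x ≤ k + 1)) =
              τ.rotate r) :=
  stmt14_general n k hk d hd
end
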